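/- arXiv:2203.01407 — 2 statements merged into one kernel-verified Lean document; each statement's English description precedes it below -/
import Mathlib

section
/- Given a fixed delivery sequence of customers with service start times defined recursively by s_1 = max(a_1, t_1, c_1) and s_{j+1} = max(a_{j+1}, s_j + d_j, c_{j+1}), where a_j are time-window opening times, t_1 is travel arrival, d_j are travel-plus-service increments, and c_j are production completion times, if two customers i < j (i delivered before j) have their production order on the same machine swapped so that the earlier-delivered customer is produced first, then every service start time in the new schedule is less than or equal to the corresponding service start time in the old schedule. -/
/-- Swapping the production completion times of two customers `i < j` on the same
machine so that the earlier-delivered customer is produced first (gets the smaller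
completion time) never increases any service start time. -/
theorem stmt_0 (a c c' d : ℕ → ℝ) (s s' : ℕ → ℝ) (t : ℝ)
    (hd : ∀ k, 0 ≤ d k)
    (i j : ℕ) (hij : i < j)
    (hci : c' i = min (c i) (c j))
    (hcj : c' j = max (c i) (c j))
    (hother : ∀ k, k ≠ i → k ≠ j → c' k = c k)
    (hs0 : s 0 = max (a 0) (max t (c 0)))
    (hs : ∀ k, s (k + 1) = max (a (k + 1)) (max (s k + d k) (c (k + 1))))
    (hs0' : s' 0 = max (a 0) (max t (c' 0)))
    (hs' : ∀ k, s' (k + 1) = max (a (k + 1)) (max (s' k + d k) (c' (k + 1)))) :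
    ∀ k, s' k ≤ s k := by
  -- s is monotone
  have hmono : Monotone s := by
    apply monotone_nat_of_le_succ
    intro k
    have h1 : s k ≤ s k + d k := le_add_of_nonneg_right (hd k)
    calc s k ≤ s k + d k := h1
      _ ≤ s (k + 1) := by rw [hs k]; exact le_max_of_le_right (le_max_left _ _)
  -- c k ≤ s k
  have hcs : ∀ k, c k ≤ s k := by
    intro k
    cases k with
    | zero => rw [hs0]; exact le_max_of_le_right (le_max_right _ _)
    | succ m => rw [hs m]; exact le_max_of_le_right (le_max_right _ _)
  -- c' k ≤ s k
  have hc's : ∀ k, c' k ≤ s k := by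
    intro k
    by_cases hki : k = i
    · subst hki
      rw [hci]
      exact le_trans (min_le_left _ _) (hcs k)
    · by_cases hkj : k = j
      · subst hkj
        rw [hcj, max_le_iff]
        exact ⟨le_trans (hcs i) (hmono hij.le), hcs k⟩
      · rw [hother k hki hkj]; exact hcs k
  intro k
  induction k with
  | zero =>
    rw [hs0']
    apply max_le
    · rw [hs0]; exact le_max_left _ _
    · apply max_le
      · rw [hs0]; exact le_max_of_le_right (le_max_left _ _)
      · exact hc's 0
  | succ m ih =>
    rw [hs' m]
    apply max_le
    · rw [hs m]; exact le_max_left _ _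
    · apply max_le
      · calc s' m + d m ≤ s m + d m := add_le_add_left ih _
          _ ≤ s (m + 1) := by rw [hs m]; exact le_max_of_le_right (le_max_left _ _)
      · exact hc's (m + 1)
end

section
/- There exists an optimal (cost-minimizing) production order for a single machine that is 'in line with' the delivery route: i.e., among all permutations of job-to-completion-time assignments on one machine serving one fixed route, the identity assignment (producing jobs in the same order as customers are visited) achieves a total delay cost no larger than any other permutation. -/
/-- Producing jobs in the same order as customers are visited (the identity
permutation) achieves a total delay cost no larger than any other permutation
of the production order on a single machine serving one fixed route. -/
theorem stmt_2 (n : ℕ) (p : Fin n → ℝ) (hp : ∀ i, 0 < p i)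
    (a b d : ℕ → ℝ) (t : ℝ) (hd : ∀ k, 0 ≤ d k)
    (σ : Equiv.Perm (Fin n))
    (Cid Cσ : Fin n → ℝ)
    (hCid : ∀ j, Cid j = ∑ i ∈ Finset.univ.filter (fun i => i ≤ j), p i)
    (hCσ : ∀ j, Cσ j = ∑ i ∈ Finset.univ.filter (fun i => σ i ≤ σ j), p i)
    (s s' : ℕ → ℝ)
    (hs0 : ∀ h0 : 0 < n, s 0 = max (a 0) (max t (Cid ⟨0, h0⟩)))
    (hs : ∀ k, ∀ hk : k + 1 < n,
      s (k + 1) = max (a (k + 1)) (max (s k + d k) (Cid ⟨k + 1, hk⟩)))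
    (hs0' : ∀ h0 : 0 < n, s' 0 = max (a 0) (max t (Cσ ⟨0, h0⟩)))
    (hs' : ∀ k, ∀ hk : k + 1 < n,
      s' (k + 1) = max (a (k + 1)) (max (s' k + d k) (Cσ ⟨k + 1, hk⟩))) :
    ∑ j ∈ Finset.range n, max 0 (s j - b j) ≤
      ∑ j ∈ Finset.range n, max 0 (s' j - b j) := by
  -- s' is nondecreasing on [0, n)
  have hmono : ∀ k, k + 1 < n → s' k ≤ s' (k + 1) := by
    intro k hk
    rw [hs' k hk]
    calc s' k ≤ s' k + d k := le_add_of_nonneg_right (hd k)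
    _ ≤ max (s' k + d k) (Cσ ⟨k + 1, hk⟩) := le_max_left _ _
    _ ≤ _ := le_max_right _ _
  have hmono' : ∀ i k, i ≤ k → k < n → s' i ≤ s' k := by
    intro i k hik hk
    induction k with
    | zero => simp [Nat.le_zero.mp hik]
    | succ m ih =>
      rcases Nat.eq_or_lt_of_le hik with h | h
      · rw [h]
      · exact le_trans (ih (by omega) (by omega)) (hmono m hk)
  have hge : ∀ k, ∀ hk : k < n, Cσ ⟨k, hk⟩ ≤ s' k := by
    intro k hk
    cases k with
    | zero => rw [hs0' hk]; exact le_trans (le_max_right _ _) (le_max_right _ _)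
    | succ m => rw [hs' m hk]; exact le_trans (le_max_right _ _) (le_max_right _ _)
  -- key: Cid j ≤ s' j
  have hkey : ∀ j, ∀ hj : j < n, Cid ⟨j, hj⟩ ≤ s' j := by
    intro j hj
    set J : Fin n := ⟨j, hj⟩
    have hne : (Finset.univ.filter (fun i : Fin n => i ≤ J)).Nonempty :=
      ⟨J, by simp⟩
    obtain ⟨i₀, hi₀mem, hi₀max⟩ := Finset.exists_max_image _ σ hne
    have hi₀le : i₀ ≤ J := by simpa using hi₀mem
    have hsub : (Finset.univ.filter (fun i : Fin n => i ≤ J)) ⊆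
        (Finset.univ.filter (fun i : Fin n => σ i ≤ σ i₀)) := by
      intro x hx
      simp only [Finset.mem_filter, Finset.mem_univ, true_and] at hx ⊢
      exact hi₀max x (by simp [hx])
    have h1 : Cid J ≤ Cσ i₀ := by
      rw [hCid, hCσ]
      exact Finset.sum_le_sum_of_subset_of_nonneg hsub
        (fun i _ _ => le_of_lt (hp i))
    have h2 : Cσ i₀ ≤ s' (i₀ : ℕ) := by
      have := hge (i₀ : ℕ) i₀.isLt
      simpa using this
    exact le_trans h1 (le_trans h2 (hmono' _ _ hi₀le hj))
  -- main: s k ≤ s' k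
  have hmain : ∀ k, k < n → s k ≤ s' k := by
    intro k
    induction k with
    | zero =>
      intro hk
      rw [hs0 hk]
      refine max_le ?_ (max_le ?_ (hkey 0 hk))
      · rw [hs0' hk]; exact le_max_left _ _
      · rw [hs0' hk]; exact le_trans (le_max_left _ _) (le_max_right _ _)
    | succ m ih =>
      intro hk
      rw [hs m hk]
      refine max_le ?_ (max_le ?_ ?_)
      · rw [hs' m hk]; exact le_max_left _ _
      · rw [hs' m hk]
        refine le_trans ?_ (le_trans (le_max_left _ _) (le_max_right _ _))
        exact add_le_add_left (ih (by omega)) _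
      · exact hkey (m + 1) hk
  refine Finset.sum_le_sum fun j hj => ?_
  have hjn : j < n := Finset.mem_range.mp hj
  exact max_le_max le_rfl (sub_le_sub_right (hmain j hjn) _)
end
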